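/- arXiv:2009.05075 — 4 statements merged into one kernel-verified Lean document; each statement's English description precedes it below -/
import Mathlib

section
/- Let η : ℝ → ℝ be a compactly supported integrable function, and define η² : ℝ² → ℝ by η²(x) = (1/(2π)) ∫₀^{2π} η(⟨x, u_θ⟩) · η(⟨x, v_θ⟩) dθ. Then η² is integrable on ℝ² and its two-dimensional Fourier transform satisfies, for every ω ∈ ℝ², η̂²(ω) = (1/(2π)) ∫₀^{2π} η̂(⟨ω, u_θ⟩) · η̂(⟨ω, v_θ⟩) dθ, where η̂ denotes the one-dimensional Fourier transform of η. -/
open MeasureTheory Real RealInnerProductSpace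

/-- The unit vector u_θ = (cos θ, sin θ) in ℝ². -/
noncomputable def uVec (θ : ℝ) : EuclideanSpace ℝ (Fin 2) :=
  (WithLp.equiv 2 (Fin 2 → ℝ)).symm ![Real.cos θ, Real.sin θ]

/-- The unit vector v_θ = u_{θ+π/2} = (−sin θ, cos θ) in ℝ². -/
noncomputable def vVec (θ : ℝ) : EuclideanSpace ℝ (Fin 2) :=
  (WithLp.equiv 2 (Fin 2 → ℝ)).symm ![-Real.sin θ, Real.cos θ]

/-- The radialization η²(x) = (1/(2π)) ∫₀^{2π} η(⟨x,u_θ⟩) η(⟨x,v_θ⟩) dθ. -/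
noncomputable def radialization (η : ℝ → ℝ) (x : EuclideanSpace ℝ (Fin 2)) : ℝ :=
  (1 / (2 * π)) * ∫ θ in (0:ℝ)..(2 * π), η ⟪x, uVec θ⟫ * η ⟪x, vVec θ⟫

open FourierTransform

/-! The map `x ↦ (⟪x, u_θ⟫, ⟪x, v_θ⟫)` is a rotation `R_θ` of `ℝ²`, so `η²` is the angular average
of `(η ⊗ η) ∘ R_θ`. Since `(θ, x) ↦ (θ, R_θ x)` preserves the product measure, this average is
integrable and Fubini lets the Fourier transform pass inside it; the Fourier transform commutes
with rotations and sends `η ⊗ η` to `η̂ ⊗ η̂`. -/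

section LinearIsometryEquivFamily

variable {E V α : Type*} [NormedAddCommGroup E] [InnerProductSpace ℝ E] [FiniteDimensional ℝ E]
  [MeasurableSpace E] [BorelSpace E] [NormedAddCommGroup V] [MeasurableSpace α] {μ : Measure α}
  {R : α → E ≃ₗᵢ[ℝ] E}

theorem measurePreserving_prod_linearIsometryEquiv [SFinite μ]
    (hR : Measurable fun p : α × E => R p.1 p.2) :
    MeasurePreserving (fun p : α × E => (p.1, R p.1 p.2)) (μ.prod volume) (μ.prod volume) :=
  (MeasurePreserving.id μ).skew_product hR (ae_of_all _ fun a => (R a).measurePreserving.map_eq)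

theorem integrable_prod_comp_linearIsometryEquiv [IsFiniteMeasure μ]
    (hR : Measurable fun p : α × E => R p.1 p.2) {F : E → V} (hF : Integrable F) :
    Integrable (fun p : α × E => F (R p.1 p.2)) (μ.prod volume) :=
  (measurePreserving_prod_linearIsometryEquiv hR).integrable_comp_of_integrable (hF.comp_snd μ)

theorem integrable_integral_comp_linearIsometryEquiv [NormedSpace ℝ V] [IsFiniteMeasure μ]
    (hR : Measurable fun p : α × E => R p.1 p.2) {F : E → V} (hF : Integrable F) :
    Integrable fun x => ∫ a, F (R a x) ∂μ :=
  (integrable_prod_comp_linearIsometryEquiv hR hF).integral_prod_right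

theorem fourier_integral_comp_linearIsometryEquiv [NormedSpace ℂ V] [IsFiniteMeasure μ]
    (hR : Measurable fun p : α × E => R p.1 p.2) {F : E → V} (hF : Integrable F) (w : E) :
    𝓕 (fun x => ∫ a, F (R a x) ∂μ) w = ∫ a, 𝓕 F (R a w) ∂μ := by
  have hint : Integrable (fun p : α × E => (𝐞 (-⟪p.2, w⟫) : ℂ) • F (R p.1 p.2)) (μ.prod volume) :=
    (integrable_prod_comp_linearIsometryEquiv hR hF).bdd_smul 1
      ((continuous_subtype_val.comp (Real.continuous_fourierChar.comp
        (continuous_id.inner continuous_const).neg)).measurable.comp measurable_snd).aestronglyMeasurable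
      (ae_of_all _ fun p => (Circle.norm_coe _).le)
  calc 𝓕 (fun x => ∫ a, F (R a x) ∂μ) w = ∫ x : E, ∫ a, (𝐞 (-⟪x, w⟫) : ℂ) • F (R a x) ∂μ := by
        simp_rw [Real.fourier_eq, Circle.smul_def, integral_smul]
    _ = ∫ a, (∫ x : E, (𝐞 (-⟪x, w⟫) : ℂ) • F (R a x)) ∂μ := (integral_integral_swap hint).symm
    _ = ∫ a, 𝓕 F (R a w) ∂μ := by
        simp_rw [← Real.fourier_comp_linearIsometry, Real.fourier_eq, Circle.smul_def]
        rfl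

end LinearIsometryEquivFamily

theorem fourier_const_mul {V : Type*} [NormedAddCommGroup V] [InnerProductSpace ℝ V]
    [MeasurableSpace V] [BorelSpace V] [FiniteDimensional ℝ V] (c : ℂ) (f : V → ℂ) (w : V) :
    𝓕 (fun x => c * f x) w = c * 𝓕 f w :=
  congrFun (VectorFourier.fourierIntegral_const_smul _ _ _ f c) w

theorem orthonormal_uVec_vVec (θ : ℝ) : Orthonormal ℝ ![uVec θ, vVec θ] := by
  rw [orthonormal_iff_ite]
  intro i j
  fin_cases i <;> fin_cases j <;>
    simp [uVec, vVec, PiLp.inner_apply, Fin.sum_univ_two, EuclideanSpace.norm_eq] <;> ring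

theorem top_le_span_uVec_vVec (θ : ℝ) : ⊤ ≤ Submodule.span ℝ (Set.range ![uVec θ, vVec θ]) := by
  have hcard : Fintype.card (Fin 2) = Module.finrank ℝ (EuclideanSpace ℝ (Fin 2)) := by simp
  rw [← coe_basisOfOrthonormalOfCardEqFinrank (orthonormal_uVec_vVec θ) hcard,
    Module.Basis.span_eq]

noncomputable def planeRotation (θ : ℝ) :
    EuclideanSpace ℝ (Fin 2) ≃ₗᵢ[ℝ] EuclideanSpace ℝ (Fin 2) :=
  (OrthonormalBasis.mk (orthonormal_uVec_vVec θ) (top_le_span_uVec_vVec θ)).repr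

theorem planeRotation_apply_zero (θ : ℝ) (x : EuclideanSpace ℝ (Fin 2)) :
    planeRotation θ x 0 = ⟪x, uVec θ⟫ := by
  rw [planeRotation, OrthonormalBasis.repr_apply_apply, OrthonormalBasis.coe_mk, real_inner_comm]
  rfl

theorem planeRotation_apply_one (θ : ℝ) (x : EuclideanSpace ℝ (Fin 2)) :
    planeRotation θ x 1 = ⟪x, vVec θ⟫ := by
  rw [planeRotation, OrthonormalBasis.repr_apply_apply, OrthonormalBasis.coe_mk, real_inner_comm]
  rfl

theorem continuous_uVec : Continuous uVec :=
  (PiLp.continuous_toLp 2 _).comp (continuous_pi fun i => by fin_cases i <;> fun_prop)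

theorem continuous_vVec : Continuous vVec :=
  (PiLp.continuous_toLp 2 _).comp (continuous_pi fun i => by fin_cases i <;> fun_prop)

theorem continuous_planeRotation_apply :
    Continuous fun p : ℝ × EuclideanSpace ℝ (Fin 2) => planeRotation p.1 p.2 := by
  have h : (fun p : ℝ × EuclideanSpace ℝ (Fin 2) => planeRotation p.1 p.2) =
      fun p => WithLp.toLp 2 ![⟪p.2, uVec p.1⟫, ⟪p.2, vVec p.1⟫] := by
    ext p i
    fin_cases i
    · exact planeRotation_apply_zero _ _
    · exact planeRotation_apply_one _ _
  rw [h]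
  refine (PiLp.continuous_toLp 2 _).comp (continuous_pi fun i => ?_)
  fin_cases i
  · exact continuous_snd.inner (continuous_uVec.comp continuous_fst)
  · exact continuous_snd.inner (continuous_vVec.comp continuous_fst)

noncomputable def euclideanFinTwoEquivProd : EuclideanSpace ℝ (Fin 2) ≃ᵐ ℝ × ℝ :=
  (MeasurableEquiv.toLp 2 (Fin 2 → ℝ)).symm.trans MeasurableEquiv.finTwoArrow

theorem measurePreserving_euclideanFinTwoEquivProd :
    MeasurePreserving euclideanFinTwoEquivProd :=
  (volume_preserving_finTwoArrow ℝ).comp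
    (EuclideanSpace.volume_preserving_symm_measurableEquiv_toLp (Fin 2))

theorem integrable_mul_coord {𝕜 : Type*} [RCLike 𝕜] {f g : ℝ → 𝕜} (hf : Integrable f)
    (hg : Integrable g) : Integrable fun y : EuclideanSpace ℝ (Fin 2) => f (y 0) * g (y 1) :=
  (measurePreserving_euclideanFinTwoEquivProd.integrable_comp_emb
    euclideanFinTwoEquivProd.measurableEmbedding).2 (hf.mul_prod hg)

theorem fourier_mul_coord (f g : ℝ → ℂ) (w : EuclideanSpace ℝ (Fin 2)) :
    𝓕 (fun y : EuclideanSpace ℝ (Fin 2) => f (y 0) * g (y 1)) w = 𝓕 f (w 0) * 𝓕 g (w 1) := by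
  have hsplit (y : EuclideanSpace ℝ (Fin 2)) : 𝐞 (-⟪y, w⟫) • (f (y 0) * g (y 1)) =
      (𝐞 (-(y 0 * w 0)) • f (y 0)) * (𝐞 (-(y 1 * w 1)) • g (y 1)) := by
    have hinner : ⟪y, w⟫ = y 0 * w 0 + y 1 * w 1 := by
      simp [PiLp.inner_apply, Fin.sum_univ_two, mul_comm]
    simp only [hinner, neg_add, AddChar.map_add_eq_mul, Circle.smul_def, Circle.coe_mul,
      smul_eq_mul]
    ring
  rw [Real.fourier_eq, Real.fourier_real_eq, Real.fourier_real_eq, ← integral_prod_mul,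
    ← Measure.volume_eq_prod, ← measurePreserving_euclideanFinTwoEquivProd.integral_comp
      euclideanFinTwoEquivProd.measurableEmbedding]
  exact integral_congr_ae (ae_of_all _ hsplit)

theorem radialization_eq_setIntegral (η : ℝ → ℝ) (x : EuclideanSpace ℝ (Fin 2)) :
    radialization η x = (1 / (2 * π)) * ∫ θ in Set.Ioc 0 (2 * π),
      η (planeRotation θ x 0) * η (planeRotation θ x 1) := by
  simp only [radialization, planeRotation_apply_zero, planeRotation_apply_one,
    intervalIntegral.integral_of_le two_pi_pos.le]

theorem ofReal_radialization_eq_setIntegral (η : ℝ → ℝ) (x : EuclideanSpace ℝ (Fin 2)) :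
    (radialization η x : ℂ) = (1 / (2 * π) : ℂ) * ∫ θ in Set.Ioc 0 (2 * π),
      (η (planeRotation θ x 0) : ℂ) * η (planeRotation θ x 1) := by
  rw [radialization_eq_setIntegral, Complex.ofReal_mul, ← integral_complex_ofReal]
  push_cast
  rfl

theorem fourier_radialization_general (η : ℝ → ℝ) (hi : Integrable η volume) :
    Integrable (radialization η) (volume : Measure (EuclideanSpace ℝ (Fin 2))) ∧
      ∀ ω : EuclideanSpace ℝ (Fin 2),
        𝓕 (fun x : EuclideanSpace ℝ (Fin 2) => (radialization η x : ℂ)) ω =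
          (1 / (2 * π) : ℂ) * ∫ θ in (0:ℝ)..(2 * π),
            𝓕 (fun t : ℝ => (η t : ℂ)) ⟪ω, uVec θ⟫ * 𝓕 (fun t : ℝ => (η t : ℂ)) ⟪ω, vVec θ⟫ := by
  have hR := continuous_planeRotation_apply.measurable
  refine ⟨?_, fun ω => ?_⟩
  · rw [funext (radialization_eq_setIntegral η)]
    exact (integrable_integral_comp_linearIsometryEquiv hR (integrable_mul_coord hi hi)).const_mul _
  have hF : Integrable fun y : EuclideanSpace ℝ (Fin 2) => (η (y 0) : ℂ) * η (y 1) :=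
    integrable_mul_coord hi.ofReal hi.ofReal
  rw [funext (ofReal_radialization_eq_setIntegral η), fourier_const_mul,
    intervalIntegral.integral_of_le two_pi_pos.le]
  refine congrArg _ ((fourier_integral_comp_linearIsometryEquiv hR hF ω).trans
    (integral_congr_ae (ae_of_all _ fun θ => ?_)))
  dsimp only
  rw [← planeRotation_apply_zero, ← planeRotation_apply_one]
  exact fourier_mul_coord (fun t => (η t : ℂ)) (fun t => (η t : ℂ)) (planeRotation θ ω)

/-- for a compactly supported integrable η : ℝ → ℝ, the radialization η² is
integrable on ℝ² and its 2D Fourier transform is the radialization (in the same angular-average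
sense) of the 1D Fourier transform of η:
η̂²(ω) = (1/(2π)) ∫₀^{2π} η̂(⟨ω,u_θ⟩) η̂(⟨ω,v_θ⟩) dθ. -/
theorem fourier_radialization (η : ℝ → ℝ)
    (hc : HasCompactSupport η) (hi : Integrable η volume) :
    Integrable (radialization η) (volume : Measure (EuclideanSpace ℝ (Fin 2))) ∧
      ∀ ω : EuclideanSpace ℝ (Fin 2),
        𝓕 (fun x : EuclideanSpace ℝ (Fin 2) => (radialization η x : ℂ)) ω =
          (1 / (2 * π) : ℂ) * ∫ θ in (0:ℝ)..(2 * π),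
            𝓕 (fun t : ℝ => (η t : ℂ)) ⟪ω, uVec θ⟫ * 𝓕 (fun t : ℝ => (η t : ℂ)) ⟪ω, vVec θ⟫ :=
  fourier_radialization_general η hi
end

section
/- Let φ, ψ : ℝ → ℝ be integrable functions such that |φ̂(ω)|² + Σ_{j=0}^{∞} |ψ̂(2^{−j} ω)|² = 1 for almost every ω ∈ ℝ. Fix an integer J and write F_J(t) = |φ̂(2^{−J} t)|² and G_j(t) = |ψ̂(2^{−j} t)|². Then for every θ ∈ ℝ and almost every ξ ∈ ℝ² (with respect to two-dimensional Lebesgue measure): F_J(⟨ξ,u_θ⟩)·F_J(⟨ξ,v_θ⟩) + Σ_{j=J}^{∞} F_J(⟨ξ,u_θ⟩)·G_j(⟨ξ,v_θ⟩) + Σ_{j=J}^{∞} G_j(⟨ξ,u_θ⟩)·F_J(⟨ξ,v_θ⟩) + Σ_{j=J}^{∞} Σ_{k=J}^{∞} G_j(⟨ξ,u_θ⟩)·G_k(⟨ξ,v_θ⟩) = 1, with all series converging. -/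
open MeasureTheory Real RealInnerProductSpace

open FourierTransform

/-- F_J(t) = |φ̂(2^{−J} t)|². -/
noncomputable def FJ (φ : ℝ → ℝ) (J : ℤ) (t : ℝ) : ℝ :=
  ‖𝓕 (fun x : ℝ => (φ x : ℂ)) ((2:ℝ) ^ (-J) * t)‖ ^ 2

/-- G_j(t) = |ψ̂(2^{−j} t)|². -/
noncomputable def Gj (ψ : ℝ → ℝ) (j : ℤ) (t : ℝ) : ℝ :=
  ‖𝓕 (fun x : ℝ => (ψ x : ℂ)) ((2:ℝ) ^ (-j) * t)‖ ^ 2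

/-!
Rescaling ω = 2^{-J} t turns the hypothesis into F_J(t) + Σ_{j ≥ J} G_j(t) = 1 for a.e. t ∈ ℝ.
Since ξ ↦ ⟨ξ, u⟩ is a surjective linear functional for u ≠ 0, it pulls null sets of ℝ back to
null sets of ℝ², so for a.e. ξ this identity holds at both t = ⟨ξ, u_θ⟩ and t = ⟨ξ, v_θ⟩.
The claimed expansion is then the product of the two identities, expanded term by term;
all terms are nonnegative, which makes the double series summable.
-/

theorem LinearMap.quasiMeasurePreserving_of_surjective {𝕜 E F : Type*}
    [NontriviallyNormedField 𝕜] [CompleteSpace 𝕜]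
    [NormedAddCommGroup E] [MeasurableSpace E] [BorelSpace E] [NormedSpace 𝕜 E]
    [LocallyCompactSpace E]
    [NormedAddCommGroup F] [MeasurableSpace F] [BorelSpace F] [NormedSpace 𝕜 F]
    (L : E →ₗ[𝕜] F) (μ : Measure E) (ν : Measure F) [μ.IsAddHaarMeasure] [ν.IsAddHaarMeasure]
    (hL : Function.Surjective L) : Measure.QuasiMeasurePreserving L μ ν := by
  have : FiniteDimensional 𝕜 E := .of_locallyCompactSpace 𝕜
  obtain ⟨c, -, hc⟩ := L.exists_map_addHaar_eq_smul_addHaar μ ν hL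
  exact ⟨L.continuous_of_finiteDimensional.measurable, hc ▸ Measure.smul_absolutelyContinuous⟩

theorem ae_comp_inner_of_ne_zero {E : Type*} [NormedAddCommGroup E] [InnerProductSpace ℝ E]
    [FiniteDimensional ℝ E] [MeasurableSpace E] [BorelSpace E]
    (μ : Measure E) [μ.IsAddHaarMeasure] {u : E} (hu : u ≠ 0) {p : ℝ → Prop}
    (hp : ∀ᵐ t : ℝ, p t) : ∀ᵐ ξ ∂μ, p ⟪ξ, u⟫ := by
  have hsurj : Function.Surjective (innerₗ E u) := fun t =>
    ⟨(t / ‖u‖ ^ 2) • u, by simp [innerₗ_apply_apply, hu]⟩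
  simpa [innerₗ_apply_apply, real_inner_comm] using
    ((innerₗ E u).quasiMeasurePreserving_of_surjective μ volume hsurj).ae hp

theorem add_tsum_mul_add_tsum {α ι κ : Type*} [Field α] [TopologicalSpace α]
    [IsTopologicalRing α] [T2Space α] (a b : α) (f : ι → α) (g : κ → α) :
    (a + ∑' i, f i) * (b + ∑' k, g k)
      = a * b + ∑' k, a * g k + ∑' i, f i * b + ∑' i, ∑' k, f i * g k := by
  simp only [tsum_mul_left, tsum_mul_right]
  ring

lemma uVec_ne_zero (θ : ℝ) : uVec θ ≠ 0 := by
  intro h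
  have h₀ := congrArg (· 0) h
  have h₁ := congrArg (· 1) h
  simp [uVec] at h₀ h₁
  nlinarith [sin_sq_add_cos_sq θ]

lemma vVec_ne_zero (θ : ℝ) : vVec θ ≠ 0 := by
  intro h
  have h₀ := congrArg (· 0) h
  have h₁ := congrArg (· 1) h
  simp [vVec] at h₀ h₁
  nlinarith [sin_sq_add_cos_sq θ]

lemma FJ_eq_FJ_zero (φ : ℝ → ℝ) (J : ℤ) (t : ℝ) : FJ φ J t = FJ φ 0 ((2:ℝ) ^ (-J) * t) := by
  simp [FJ]

lemma Gj_add (ψ : ℝ → ℝ) (j k : ℤ) (t : ℝ) : Gj ψ (j + k) t = Gj ψ k ((2:ℝ) ^ (-j) * t) := by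
  simp only [Gj, neg_add, zpow_add₀ (two_ne_zero' ℝ), mul_comm, mul_assoc]

lemma Gj_nonneg (ψ : ℝ → ℝ) (j : ℤ) (t : ℝ) : 0 ≤ Gj ψ j t := by
  unfold Gj; positivity

lemma ae_FJ_add_tsum_Gj_eq_one {φ ψ : ℝ → ℝ}
    (hMRA : ∀ᵐ ω : ℝ, Summable (fun j : ℕ => Gj ψ (j:ℤ) ω) ∧
      FJ φ 0 ω + ∑' j : ℕ, Gj ψ (j:ℤ) ω = 1) (J : ℤ) :
    ∀ᵐ t : ℝ, Summable (fun n : ℕ => Gj ψ (J + n) t) ∧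
      FJ φ J t + ∑' n : ℕ, Gj ψ (J + n) t = 1 := by
  have hJ : ((2:ℝ) ^ (-J)) ≠ 0 := zpow_ne_zero _ two_ne_zero
  filter_upwards [(Measure.quasiMeasurePreserving_smul volume hJ).ae hMRA] with t ht
  simpa only [smul_eq_mul, Gj_add, ← FJ_eq_FJ_zero] using ht

theorem product_partition_ae_general (φ ψ : ℝ → ℝ)
    (hMRA : ∀ᵐ ω : ℝ, Summable (fun j : ℕ => Gj ψ (j:ℤ) ω) ∧
      FJ φ 0 ω + ∑' j : ℕ, Gj ψ (j:ℤ) ω = 1) (J : ℤ) :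
    ∀ θ : ℝ, ∀ᵐ ξ : EuclideanSpace ℝ (Fin 2),
      Summable (fun n : ℕ => FJ φ J ⟪ξ, uVec θ⟫ * Gj ψ (J + n) ⟪ξ, vVec θ⟫) ∧
      Summable (fun n : ℕ => Gj ψ (J + n) ⟪ξ, uVec θ⟫ * FJ φ J ⟪ξ, vVec θ⟫) ∧
      Summable (fun p : ℕ × ℕ =>
        Gj ψ (J + p.1) ⟪ξ, uVec θ⟫ * Gj ψ (J + p.2) ⟪ξ, vVec θ⟫) ∧
      FJ φ J ⟪ξ, uVec θ⟫ * FJ φ J ⟪ξ, vVec θ⟫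
        + (∑' n : ℕ, FJ φ J ⟪ξ, uVec θ⟫ * Gj ψ (J + n) ⟪ξ, vVec θ⟫)
        + (∑' n : ℕ, Gj ψ (J + n) ⟪ξ, uVec θ⟫ * FJ φ J ⟪ξ, vVec θ⟫)
        + (∑' n : ℕ, ∑' m : ℕ, Gj ψ (J + n) ⟪ξ, uVec θ⟫ * Gj ψ (J + m) ⟪ξ, vVec θ⟫) = 1 := by
  intro θ
  have h := ae_FJ_add_tsum_Gj_eq_one hMRA J
  filter_upwards [ae_comp_inner_of_ne_zero volume (uVec_ne_zero θ) h,
    ae_comp_inner_of_ne_zero volume (vVec_ne_zero θ) h] with ξ ⟨hsu, hu⟩ ⟨hsv, hv⟩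
  refine ⟨hsv.mul_left _, hsu.mul_right _,
    hsu.mul_of_nonneg hsv (fun _ => Gj_nonneg ..) (fun _ => Gj_nonneg ..), ?_⟩
  rw [← add_tsum_mul_add_tsum, hu, hv, one_mul]

/-- if φ, ψ are integrable with
|φ̂(ω)|² + Σ_{j=0}^∞ |ψ̂(2^{−j}ω)|² = 1 a.e., then for each integer J and each angle θ,
for a.e. ξ ∈ ℝ² the product expansion
F_J(⟨ξ,u_θ⟩)F_J(⟨ξ,v_θ⟩) + Σ_{j≥J} F_J(⟨ξ,u_θ⟩)G_j(⟨ξ,v_θ⟩)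
 + Σ_{j≥J} G_j(⟨ξ,u_θ⟩)F_J(⟨ξ,v_θ⟩) + Σ_{j,k≥J} G_j(⟨ξ,u_θ⟩)G_k(⟨ξ,v_θ⟩) = 1
holds, with all series converging. -/
theorem product_partition_ae (φ ψ : ℝ → ℝ)
    (hφ : Integrable φ volume) (hψ : Integrable ψ volume)
    (hMRA : ∀ᵐ ω : ℝ, Summable (fun j : ℕ => Gj ψ (j:ℤ) ω) ∧
      FJ φ 0 ω + ∑' j : ℕ, Gj ψ (j:ℤ) ω = 1) (J : ℤ) :
    ∀ θ : ℝ, ∀ᵐ ξ : EuclideanSpace ℝ (Fin 2),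
      Summable (fun n : ℕ => FJ φ J ⟪ξ, uVec θ⟫ * Gj ψ (J + n) ⟪ξ, vVec θ⟫) ∧
      Summable (fun n : ℕ => Gj ψ (J + n) ⟪ξ, uVec θ⟫ * FJ φ J ⟪ξ, vVec θ⟫) ∧
      Summable (fun p : ℕ × ℕ =>
        Gj ψ (J + p.1) ⟪ξ, uVec θ⟫ * Gj ψ (J + p.2) ⟪ξ, vVec θ⟫) ∧
      FJ φ J ⟪ξ, uVec θ⟫ * FJ φ J ⟪ξ, vVec θ⟫
        + (∑' n : ℕ, FJ φ J ⟪ξ, uVec θ⟫ * Gj ψ (J + n) ⟪ξ, vVec θ⟫)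
        + (∑' n : ℕ, Gj ψ (J + n) ⟪ξ, uVec θ⟫ * FJ φ J ⟪ξ, vVec θ⟫)
        + (∑' n : ℕ, ∑' m : ℕ, Gj ψ (J + n) ⟪ξ, uVec θ⟫ * Gj ψ (J + m) ⟪ξ, vVec θ⟫) = 1 :=
  product_partition_ae_general φ ψ hMRA J
end

section
/- Fourier slice theorem: let f : ℝ² → ℂ be integrable. For θ ∈ ℝ, define the Radon projection R_θ f : ℝ → ℂ by R_θ f(t) = ∫_ℝ f(t·u_θ + s·v_θ) ds where u_θ = (cos θ, sin θ) and v_θ = (−sin θ, cos θ). Then for almost every t ∈ ℝ the integral defining R_θ f(t) converges, R_θ f is integrable on ℝ, and for every r ∈ ℝ the one-dimensional Fourier transform of R_θ f satisfies (R_θ f)^(r) = f̂(r·u_θ), where f̂ is the two-dimensional Fourier transform of f. -/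
/-!
Rotating the plane so that `u_θ, v_θ` become the coordinate axes preserves Lebesgue measure, so
`(t, s) ↦ f (t • u_θ + s • v_θ)` is integrable on `ℝ × ℝ`. Fubini then gives the first two claims,
and integrating out `s` first in `f̂ (r • u_θ)` gives the third, because the character
`𝐞 (-⟪t • u_θ + s • v_θ, r • u_θ⟫) = 𝐞 (-t r)` does not depend on `s`.
-/

open MeasureTheory Real RealInnerProductSpace

open FourierTransform

/-- The Radon projection R_θ f(t) = ∫ f(t u_θ + s v_θ) ds. -/
noncomputable def radon (f : EuclideanSpace ℝ (Fin 2) → ℂ) (θ : ℝ) (t : ℝ) : ℂ :=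
  ∫ s : ℝ, f (t • uVec θ + s • vVec θ)

section FourierFiberwise

variable {V E β : Type*} [NormedAddCommGroup V] [InnerProductSpace ℝ V] [FiniteDimensional ℝ V]
  [MeasurableSpace V] [BorelSpace V] [NormedAddCommGroup E] [NormedSpace ℂ E]
  [MeasurableSpace β] {ν : Measure β} [SFinite ν]

theorem Real.fourier_integral_snd_eq_integral_prod {F : V × β → E}
    (hF : Integrable F ((volume : Measure V).prod ν)) (w : V) :
    𝓕 (fun v ↦ ∫ b, F (v, b) ∂ν) w = ∫ p, 𝐞 (-⟪p.1, w⟫) • F p ∂(volume : Measure V).prod ν := by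
  have hint : Integrable (fun p : V × β ↦ 𝐞 (-⟪p.1, w⟫) • F p) ((volume : Measure V).prod ν) :=
    hF.norm.mono' (by fun_prop) (.of_forall fun p ↦ by rw [Circle.norm_smul])
  rw [Real.fourier_eq, integral_prod _ hint]
  congr 1 with v
  exact (integral_smul _ _).symm

end FourierFiberwise

section OrthonormalPlane

variable {F : Type*} [NormedAddCommGroup F] [InnerProductSpace ℝ F] [MeasurableSpace F]
  [BorelSpace F]

noncomputable def OrthonormalBasis.prodMeasurableEquiv (b : OrthonormalBasis (Fin 2) ℝ F) :
    ℝ × ℝ ≃ᵐ F :=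
  MeasurableEquiv.finTwoArrow.symm.trans
    ((MeasurableEquiv.toLp 2 (Fin 2 → ℝ)).trans b.measurableEquiv.symm)

theorem OrthonormalBasis.prodMeasurableEquiv_apply (b : OrthonormalBasis (Fin 2) ℝ F)
    (p : ℝ × ℝ) : b.prodMeasurableEquiv p = p.1 • b 0 + p.2 • b 1 := by
  simp [prodMeasurableEquiv, OrthonormalBasis.measurableEquiv, ← b.sum_repr_symm, Fin.sum_univ_two]

theorem OrthonormalBasis.measurePreserving_prodMeasurableEquiv [FiniteDimensional ℝ F]
    (b : OrthonormalBasis (Fin 2) ℝ F) :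
    MeasurePreserving b.prodMeasurableEquiv ((volume : Measure ℝ).prod volume) volume :=
  b.measurePreserving_measurableEquiv.symm.comp <|
    (PiLp.volume_preserving_toLp (Fin 2)).comp (measurePreserving_finTwoArrow volume).symm

theorem OrthonormalBasis.inner_prodMeasurableEquiv_smul (b : OrthonormalBasis (Fin 2) ℝ F)
    (p : ℝ × ℝ) (r : ℝ) : ⟪b.prodMeasurableEquiv p, r • b 0⟫ = p.1 * r := by
  simp [b.prodMeasurableEquiv_apply, inner_add_left, inner_smul_left, inner_smul_right,
    b.orthonormal.inner_eq_zero (by decide : (1 : Fin 2) ≠ 0), mul_comm]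

end OrthonormalPlane

noncomputable def rotationBasis (θ : ℝ) : OrthonormalBasis (Fin 2) ℝ (EuclideanSpace ℝ (Fin 2)) :=
  (basisOfOrthonormalOfCardEqFinrank (orthonormal_uVec_vVec θ) (by simp)).toOrthonormalBasis
    (by rw [coe_basisOfOrthonormalOfCardEqFinrank]; exact orthonormal_uVec_vVec θ)

theorem coe_rotationBasis (θ : ℝ) : ⇑(rotationBasis θ) = ![uVec θ, vVec θ] := by
  rw [rotationBasis, Module.Basis.coe_toOrthonormalBasis, coe_basisOfOrthonormalOfCardEqFinrank]

/-- Fourier slice theorem: for integrable f : ℝ² → ℂ and any angle θ, the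
integral defining R_θ f(t) converges for a.e. t, R_θ f is integrable on ℝ, and the 1D Fourier
transform of R_θ f coincides with the 2D Fourier transform of f along the ray through u_θ. -/
theorem fourier_slice (f : EuclideanSpace ℝ (Fin 2) → ℂ)
    (hf : Integrable f (volume : Measure (EuclideanSpace ℝ (Fin 2)))) (θ : ℝ) :
    (∀ᵐ t : ℝ, Integrable (fun s : ℝ => f (t • uVec θ + s • vVec θ)) volume) ∧
      Integrable (radon f θ) volume ∧
      ∀ r : ℝ, 𝓕 (radon f θ) r = 𝓕 f (r • uVec θ) := by
  set Φ := (rotationBasis θ).prodMeasurableEquiv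
  have hΦ : ∀ p : ℝ × ℝ, Φ p = p.1 • uVec θ + p.2 • vVec θ := fun p ↦ by
    simp [Φ, OrthonormalBasis.prodMeasurableEquiv_apply, coe_rotationBasis]
  have hΦmp : MeasurePreserving Φ ((volume : Measure ℝ).prod volume) volume :=
    (rotationBasis θ).measurePreserving_prodMeasurableEquiv
  have hF : Integrable (fun p : ℝ × ℝ ↦ f (p.1 • uVec θ + p.2 • vVec θ))
      ((volume : Measure ℝ).prod volume) := by
    simpa only [Function.comp_def, hΦ] using (hΦmp.integrable_comp_emb Φ.measurableEmbedding).2 hf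
  refine ⟨hF.prod_right_ae, hF.integral_prod_left, fun r ↦ ?_⟩
  have hinner (p : ℝ × ℝ) : ⟪Φ p, r • uVec θ⟫ = ⟪p.1, r⟫ := by
    simpa [coe_rotationBasis, mul_comm] using (rotationBasis θ).inner_prodMeasurableEquiv_smul p r
  calc 𝓕 (radon f θ) r
      = ∫ p : ℝ × ℝ, 𝐞 (-⟪p.1, r⟫) • f (p.1 • uVec θ + p.2 • vVec θ) ∂(volume.prod volume) :=
        Real.fourier_integral_snd_eq_integral_prod hF r
    _ = ∫ p : ℝ × ℝ, 𝐞 (-⟪Φ p, r • uVec θ⟫) • f (Φ p) ∂(volume.prod volume) := by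
        simp_rw [hinner, hΦ]
    _ = 𝓕 f (r • uVec θ) := hΦmp.integral_comp' fun x ↦ 𝐞 (-⟪x, r • uVec θ⟫) • f x
end

section
/- Let f and η be Schwartz functions on ℝ², and suppose η is radially symmetric, i.e., η(Aω) = η(ω) for every rotation A ∈ SO(2). Define the ramp-filtered function k : ℝ → ℂ as the one-dimensional inverse Fourier transform of t ↦ |t| · η̂(t·u₀), where u₀ = (1,0). Then for every x ∈ ℝ², (f ⋆ η)(x) = ∫₀^{π} (R_θ f ⋆₁ k)(⟨x, u_θ⟩) dθ, where ⋆ is convolution on ℝ², ⋆₁ is convolution on ℝ, and R_θ f(t) = ∫_ℝ f(t·u_θ + s·v_θ) ds. In particular, the filter k does not depend on the angle θ. -/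
open MeasureTheory Real RealInnerProductSpace

open FourierTransform

/-- Convolution on ℝ² of complex-valued functions: (f ⋆ η)(x) = ∫ f(y) η(x − y) dy. -/
noncomputable def conv2c (f η : EuclideanSpace ℝ (Fin 2) → ℂ)
    (x : EuclideanSpace ℝ (Fin 2)) : ℂ :=
  ∫ y : EuclideanSpace ℝ (Fin 2), f y * η (x - y)

/-- Convolution on ℝ: (g ⋆₁ k)(t) = ∫ g(s) k(t − s) ds. -/
noncomputable def conv1c (g k : ℝ → ℂ) (t : ℝ) : ℂ :=
  ∫ s : ℝ, g s * k (t - s)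

local notation "E2" => EuclideanSpace ℝ (Fin 2)

namespace Ramp

noncomputable def toE2 : (ℝ × ℝ) ≃ᵐ E2 :=
  (MeasurableEquiv.finTwoArrow.symm).trans (MeasurableEquiv.toLp 2 (Fin 2 → ℝ))

lemma toE2_apply (p : ℝ × ℝ) (i : Fin 2) : toE2 p i = ![p.1, p.2] i := by
  simp [toE2, MeasurableEquiv.finTwoArrow, MeasurableEquiv.toLp, finTwoArrowEquiv]
  rfl

lemma toE2_mp : MeasurePreserving (toE2 : ℝ × ℝ → E2) :=
  ((EuclideanSpace.volume_preserving_symm_measurableEquiv_toLp (Fin 2)).symm).comp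
    ((volume_preserving_finTwoArrow ℝ).symm)

@[simp] lemma uVec_apply_zero (θ : ℝ) : uVec θ 0 = Real.cos θ := rfl
@[simp] lemma uVec_apply_one (θ : ℝ) : uVec θ 1 = Real.sin θ := rfl
@[simp] lemma vVec_apply_zero (θ : ℝ) : vVec θ 0 = -Real.sin θ := rfl
@[simp] lemma vVec_apply_one (θ : ℝ) : vVec θ 1 = Real.cos θ := rfl

lemma inner_uu (θ : ℝ) : ⟪uVec θ, uVec θ⟫ = (1:ℝ) := by
  simp only [PiLp.inner_apply, RCLike.inner_apply, conj_trivial, Fin.sum_univ_two,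
    uVec_apply_zero, uVec_apply_one]
  nlinarith [Real.sin_sq_add_cos_sq θ]

lemma inner_uv (θ : ℝ) : ⟪uVec θ, vVec θ⟫ = (0:ℝ) := by
  simp only [PiLp.inner_apply, RCLike.inner_apply, conj_trivial, Fin.sum_univ_two,
    uVec_apply_zero, uVec_apply_one, vVec_apply_zero, vVec_apply_one]
  ring

lemma inner_vu (θ : ℝ) : ⟪vVec θ, uVec θ⟫ = (0:ℝ) := by
  rw [real_inner_comm]; exact inner_uv θ

noncomputable def rotMat (θ : ℝ) : Matrix (Fin 2) (Fin 2) ℝ :=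
  !![Real.cos θ, -Real.sin θ; Real.sin θ, Real.cos θ]

lemma rotMat_mem (θ : ℝ) : rotMat θ ∈ Matrix.specialOrthogonalGroup (Fin 2) ℝ := by
  rw [Matrix.mem_specialOrthogonalGroup_iff]
  constructor
  · rw [Matrix.mem_orthogonalGroup_iff]
    ext i j
    fin_cases i <;> fin_cases j <;>
      simp [rotMat, Matrix.mul_apply, Fin.sum_univ_two, Matrix.star_eq_conjTranspose,
        Matrix.transpose_apply, Matrix.vecHead, Matrix.vecTail] <;>
      nlinarith [Real.sin_sq_add_cos_sq θ]
  · simp [rotMat, Matrix.det_fin_two_of]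
    nlinarith [Real.sin_sq_add_cos_sq θ]

noncomputable def rotLM (θ : ℝ) : E2 →ₗ[ℝ] E2 where
  toFun x := x 0 • uVec θ + x 1 • vVec θ
  map_add' x y := by
    simp only [PiLp.add_apply, add_smul]
    abel
  map_smul' c x := by
    simp only [PiLp.smul_apply, smul_eq_mul, RingHom.id_apply, smul_add, smul_smul]

@[simp] lemma rotLM_apply_zero (θ : ℝ) (x : E2) :
    rotLM θ x 0 = x 0 * Real.cos θ - x 1 * Real.sin θ := by
  change (x 0 • uVec θ + x 1 • vVec θ) 0 = _
  simp [rotLM, PiLp.add_apply, PiLp.smul_apply, smul_eq_mul]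
  ring

@[simp] lemma rotLM_apply_one (θ : ℝ) (x : E2) :
    rotLM θ x 1 = x 0 * Real.sin θ + x 1 * Real.cos θ := by
  change (x 0 • uVec θ + x 1 • vVec θ) 1 = _
  simp [rotLM, PiLp.add_apply, PiLp.smul_apply, smul_eq_mul]

noncomputable def rotL (θ : ℝ) : E2 ≃ₗᵢ[ℝ] E2 :=
  LinearEquiv.isometryOfInner
    (LinearEquiv.ofLinear (rotLM θ) (rotLM (-θ))
      (by
        apply LinearMap.ext
        intro x
        apply PiLp.ext
        intro i
        fin_cases i <;>
          simp [Real.cos_neg, Real.sin_neg] <;>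
          first
            | linear_combination (x 0 : ℝ) * Real.sin_sq_add_cos_sq θ
            | linear_combination (x 1 : ℝ) * Real.sin_sq_add_cos_sq θ)
      (by
        apply LinearMap.ext
        intro x
        apply PiLp.ext
        intro i
        fin_cases i <;>
          simp [Real.cos_neg, Real.sin_neg] <;>
          first
            | linear_combination (x 0 : ℝ) * Real.sin_sq_add_cos_sq θ
            | linear_combination (x 1 : ℝ) * Real.sin_sq_add_cos_sq θ))
    (by
      intro x y
      simp only [LinearEquiv.ofLinear_apply, PiLp.inner_apply, RCLike.inner_apply, conj_trivial,
        Fin.sum_univ_two, rotLM_apply_zero, rotLM_apply_one]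
      linear_combination (x 0 * y 0 + x 1 * y 1 : ℝ) * Real.sin_sq_add_cos_sq θ)

lemma rotL_apply (θ : ℝ) (x : E2) : rotL θ x = x 0 • uVec θ + x 1 • vVec θ := rfl

@[simp] lemma rotL_apply_zero (θ : ℝ) (x : E2) :
    rotL θ x 0 = x 0 * Real.cos θ - x 1 * Real.sin θ := rotLM_apply_zero θ x

@[simp] lemma rotL_apply_one (θ : ℝ) (x : E2) :
    rotL θ x 1 = x 0 * Real.sin θ + x 1 * Real.cos θ := rotLM_apply_one θ x

lemma rotL_toE2 (θ : ℝ) (p : ℝ × ℝ) :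
    rotL θ (toE2 p) = p.1 • uVec θ + p.2 • vVec θ := by
  have h0 : toE2 p 0 = p.1 := by rw [toE2_apply]; rfl
  have h1 : toE2 p 1 = p.2 := by rw [toE2_apply]; rfl
  rw [rotL_apply, h0, h1]

lemma rotL_smul_u0 (θ : ℝ) (r : ℝ) : rotL θ (r • uVec 0) = r • uVec θ := by
  apply PiLp.ext
  intro i
  fin_cases i <;>
    simp [PiLp.smul_apply, smul_eq_mul] <;> ring

lemma rotL_eq_mulVec (θ : ℝ) (ω : E2) :
    rotL θ ω = (WithLp.equiv 2 (Fin 2 → ℝ)).symm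
      ((rotMat θ).mulVec ((WithLp.equiv 2 (Fin 2 → ℝ)) ω)) := by
  apply PiLp.ext
  intro i
  fin_cases i <;>
    simp [rotMat, Matrix.mulVec, dotProduct, Fin.sum_univ_two,
      Matrix.vecHead, Matrix.vecTail] <;> ring

noncomputable def mapRot (θ : ℝ) : (ℝ × ℝ) ≃ᵐ E2 :=
  toE2.trans (rotL θ).toHomeomorph.toMeasurableEquiv

lemma mapRot_apply (θ : ℝ) (p : ℝ × ℝ) :
    mapRot θ p = p.1 • uVec θ + p.2 • vVec θ := rotL_toE2 θ p

lemma mapRot_mp (θ : ℝ) : MeasurePreserving (mapRot θ : ℝ × ℝ → E2) :=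
  ((rotL θ).measurePreserving).comp toE2_mp

lemma norm_char (x : ℝ) : ‖(Real.fourierChar x : ℂ)‖ = 1 := by
  exact Circle.norm_coe _

lemma integrable_char_smul {α : Type*} [MeasurableSpace α] {μ : Measure α} {g : α → ℂ}
    (hg : Integrable g μ) {φ : α → ℝ}
    (hφ : AEStronglyMeasurable (fun a => (Real.fourierChar (φ a) : ℂ)) μ) :
    Integrable (fun a => Real.fourierChar (φ a) • g a) μ := by
  simpa [Circle.smul_def, smul_eq_mul] using
    hg.bdd_mul hφ (c := 1) (Filter.Eventually.of_forall fun a => le_of_eq (norm_char (φ a)))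

lemma aesm_char {α : Type*} [MeasurableSpace α] [TopologicalSpace α] [OpensMeasurableSpace α]
    {μ : Measure α} {φ : α → ℝ} (hφ : Continuous φ) :
    AEStronglyMeasurable (fun a => (Real.fourierChar (φ a) : ℂ)) μ :=
  (continuous_subtype_val.comp (Real.continuous_fourierChar.comp hφ)).aestronglyMeasurable

lemma slice (f : E2 → ℂ) (hi : Integrable f) (θ r : ℝ) :
    𝓕 f (r • uVec θ) = 𝓕 (radon f θ) r := by
  have hcomp : Integrable (fun p : ℝ × ℝ => f (mapRot θ p)) :=
    ((mapRot_mp θ).integrable_comp_emb (mapRot θ).measurableEmbedding).2 hi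
  have hinner : ∀ p : ℝ × ℝ, (⟪mapRot θ p, r • uVec θ⟫ : ℝ) = p.1 * r := by
    intro p
    rw [mapRot_apply, real_inner_smul_right, inner_add_left, real_inner_smul_left,
      real_inner_smul_left, inner_uu, inner_vu]
    ring
  have hF : Integrable (fun p : ℝ × ℝ => Real.fourierChar (-(p.1 * r)) • f (mapRot θ p)) := by
    exact integrable_char_smul hcomp
      (aesm_char ((continuous_fst.mul continuous_const).neg))
  calc 𝓕 f (r • uVec θ) = ∫ v : E2, Real.fourierChar (-⟪v, r • uVec θ⟫) • f v :=
        Real.fourier_eq _ _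
    _ = ∫ p : ℝ × ℝ, Real.fourierChar (-⟪mapRot θ p, r • uVec θ⟫) • f (mapRot θ p) :=
        ((mapRot_mp θ).integral_comp (mapRot θ).measurableEmbedding _).symm
    _ = ∫ p : ℝ × ℝ, Real.fourierChar (-(p.1 * r)) • f (mapRot θ p) := by
        congr 1; funext p; rw [hinner p]
    _ = ∫ t : ℝ, ∫ s : ℝ, Real.fourierChar (-(t * r)) • f (mapRot θ (t, s)) := by
        rw [Measure.volume_eq_prod] at hF ⊢
        exact integral_prod _ hF
    _ = ∫ t : ℝ, Real.fourierChar (-(t * r)) • radon f θ t := by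
        congr 1; funext t
        simp_rw [Circle.smul_def, smul_eq_mul, mapRot_apply]
        rw [integral_const_mul, radon]
    _ = 𝓕 (radon f θ) r := by
        rw [Real.fourier_real_eq]

lemma fourier_radial (g : E2 → ℂ) (hrot : ∀ θ ω, g (rotL θ ω) = g ω) (θ r : ℝ) :
    𝓕 g (r • uVec θ) = 𝓕 g (r • uVec 0) := by
  rw [← rotL_smul_u0 θ r, ← Real.fourier_comp_linearIsometry (rotL θ) g (r • uVec 0)]
  exact congrArg (fun h : E2 → ℂ => 𝓕 h (r • uVec 0)) (funext fun ω => hrot θ ω)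

lemma key1d (g m : ℝ → ℂ) (hg : Integrable g) (hm : Integrable m) (t : ℝ) :
    (∫ s : ℝ, g s * (𝓕⁻ m) (t - s))
      = ∫ r : ℝ, Real.fourierChar (r * t) • (𝓕 g r * m r) := by
  have hgm : Integrable (fun q : ℝ × ℝ => g q.1 * m q.2) (volume.prod volume) :=
    hg.mul_prod hm
  have hF : Integrable (fun q : ℝ × ℝ => g q.1 * (Real.fourierChar (q.2 * (t - q.1)) • m q.2))
      (volume.prod volume) := by
    have e : (fun q : ℝ × ℝ => g q.1 * (Real.fourierChar (q.2 * (t - q.1)) • m q.2))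
        = fun q : ℝ × ℝ => Real.fourierChar (q.2 * (t - q.1)) • (g q.1 * m q.2) := by
      funext q
      simp only [Circle.smul_def, smul_eq_mul]
      ring
    rw [e]
    exact integrable_char_smul hgm (aesm_char (by fun_prop))
  have hpt : ∀ r s : ℝ, g s * (Real.fourierChar (r * (t - s)) • m r)
      = (Real.fourierChar (r * t) : ℂ) * (((Real.fourierChar (-(s * r)) : ℂ) * g s) * m r) := by
    intro r s
    simp only [Circle.smul_def, smul_eq_mul, Real.fourierChar_apply]
    rw [show ((2 * π * (r * (t - s)) : ℝ) : ℂ) * Complex.I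
        = ((2 * π * (r * t) : ℝ) : ℂ) * Complex.I + ((2 * π * (-(s * r)) : ℝ) : ℂ) * Complex.I by
      push_cast; ring, Complex.exp_add]
    ring
  calc (∫ s : ℝ, g s * (𝓕⁻ m) (t - s))
      = ∫ s : ℝ, ∫ r : ℝ, g s * (Real.fourierChar (r * (t - s)) • m r) := by
        congr 1; funext s
        rw [Real.fourierInv_eq, ← integral_const_mul]
        simp only [RCLike.inner_apply, conj_trivial]
        simp only [mul_comm (t - s)]
    _ = ∫ r : ℝ, ∫ s : ℝ, g s * (Real.fourierChar (r * (t - s)) • m r) :=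
        integral_integral_swap hF
    _ = ∫ r : ℝ, Real.fourierChar (r * t) • (𝓕 g r * m r) := by
        congr 1; funext r
        simp_rw [hpt r]
        rw [integral_const_mul, integral_mul_const, Circle.smul_def]
        congr 2
        rw [Real.fourier_real_eq]
        simp only [Circle.smul_def, smul_eq_mul]

lemma conv2_fourier (f η : E2 → ℂ) (hf : Integrable f) (hη1 : Continuous η) (hη2 : Integrable η)
    (hη3 : Integrable (𝓕 η)) (x : E2) :
    (∫ y : E2, f y * η (x - y))
      = ∫ ω : E2, Real.fourierChar ⟪x, ω⟫ • (𝓕 f ω * 𝓕 η ω) := by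
  have hinv : ∀ z : E2, η z = ∫ ω : E2, Real.fourierChar ⟪z, ω⟫ • 𝓕 η ω := by
    intro z
    conv_lhs => rw [← hη1.fourierInv_fourier_eq hη2 hη3]
    rw [Real.fourierInv_eq]
    congr 1; funext v; rw [real_inner_comm]
  have hgm : Integrable (fun q : E2 × E2 => f q.1 * 𝓕 η q.2) (volume.prod volume) :=
    hf.mul_prod hη3
  have hF : Integrable (fun q : E2 × E2 => f q.1 * (Real.fourierChar ⟪x - q.1, q.2⟫ • 𝓕 η q.2))
      (volume.prod volume) := by
    have e : (fun q : E2 × E2 => f q.1 * (Real.fourierChar ⟪x - q.1, q.2⟫ • 𝓕 η q.2))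
        = fun q : E2 × E2 => Real.fourierChar ⟪x - q.1, q.2⟫ • (f q.1 * 𝓕 η q.2) := by
      funext q
      simp only [Circle.smul_def, smul_eq_mul]
      ring
    rw [e]
    refine integrable_char_smul hgm (aesm_char ?_)
    exact (continuous_const.sub continuous_fst).inner continuous_snd
  have hpt : ∀ ω y : E2, f y * (Real.fourierChar ⟪x - y, ω⟫ • 𝓕 η ω)
      = (Real.fourierChar ⟪x, ω⟫ : ℂ) * (((Real.fourierChar (-⟪y, ω⟫) : ℂ) * f y) * 𝓕 η ω) := by
    intro ω y
    simp only [Circle.smul_def, smul_eq_mul, Real.fourierChar_apply]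
    rw [inner_sub_left]
    rw [show ((2 * π * ((⟪x, ω⟫ : ℝ) - ⟪y, ω⟫) : ℝ) : ℂ) * Complex.I
        = ((2 * π * (⟪x, ω⟫ : ℝ) : ℝ) : ℂ) * Complex.I
          + ((2 * π * (-(⟪y, ω⟫ : ℝ)) : ℝ) : ℂ) * Complex.I by push_cast; ring, Complex.exp_add]
    ring
  calc (∫ y : E2, f y * η (x - y))
      = ∫ y : E2, ∫ ω : E2, f y * (Real.fourierChar ⟪x - y, ω⟫ • 𝓕 η ω) := by
        congr 1; funext y
        rw [hinv (x - y), ← integral_const_mul]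
    _ = ∫ ω : E2, ∫ y : E2, f y * (Real.fourierChar ⟪x - y, ω⟫ • 𝓕 η ω) :=
        integral_integral_swap hF
    _ = ∫ ω : E2, Real.fourierChar ⟪x, ω⟫ • (𝓕 f ω * 𝓕 η ω) := by
        congr 1; funext ω
        simp_rw [hpt ω]
        rw [integral_const_mul, integral_mul_const, Circle.smul_def]
        congr 2

lemma toE2_polar (p : ℝ × ℝ) : toE2 (polarCoord.symm p) = p.1 • uVec p.2 := by
  apply PiLp.ext
  intro i
  rw [toE2_apply]
  fin_cases i <;> simp [polarCoord, PiLp.smul_apply, smul_eq_mul]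

lemma uVec_sub_pi (θ : ℝ) : uVec (θ - π) = -uVec θ := by
  apply PiLp.ext
  intro i
  fin_cases i <;> simp [PiLp.neg_apply, Real.cos_sub_pi, Real.sin_sub_pi]

lemma polar_fold (G : E2 → ℂ) (hG : Integrable G)
    (hray : ∀ θ : ℝ, Integrable (fun r : ℝ => |r| • G (r • uVec θ))) :
    (∫ ω : E2, G ω) = ∫ θ in (0:ℝ)..π, ∫ r : ℝ, |r| • G (r • uVec θ) := by
  have pi_pos := Real.pi_pos
  have hg2 : Integrable (fun p : ℝ × ℝ => G (toE2 p)) :=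
    (toE2_mp.integrable_comp_emb toE2.measurableEmbedding).2 hG
  set B : ℝ × ℝ → ℝ × ℝ →L[ℝ] ℝ × ℝ := fun p =>
    LinearMap.toContinuousLinearMap (Matrix.toLin (Module.Basis.finTwoProd ℝ) (Module.Basis.finTwoProd ℝ)
      !![Real.cos p.2, -p.1 * Real.sin p.2; Real.sin p.2, p.1 * Real.cos p.2]) with hBdef
  have B_det : ∀ p : ℝ × ℝ, (B p).det = p.1 := by
    intro p
    conv_rhs => rw [← one_mul p.1, ← Real.cos_sq_add_sin_sq p.2]
    simp only [hBdef, neg_mul, LinearMap.det_toContinuousLinearMap, LinearMap.det_toLin,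
      Matrix.det_fin_two_of, sub_neg_eq_add]
    ring
  -- integrability of the polar integrand on the target
  have hFT : IntegrableOn (fun p : ℝ × ℝ => |p.1| • G (p.1 • uVec p.2)) polarCoord.target := by
    have h1 : IntegrableOn (fun p : ℝ × ℝ => G (toE2 p))
        (polarCoord.symm '' polarCoord.target) := hg2.integrableOn
    rw [integrableOn_image_iff_integrableOn_abs_det_fderiv_smul volume
      polarCoord.open_target.measurableSet
      (fun p _ => (hasFDerivAt_polarCoord_symm p).hasFDerivWithinAt)
      polarCoord.symm.injOn (fun p => G (toE2 p))] at h1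
    refine h1.congr_fun (fun p _ => ?_) polarCoord.open_target.measurableSet
    simp only [det_fderivPolarCoordSymm, toE2_polar]
  have hFT' : Integrable (fun p : ℝ × ℝ => |p.1| • G (p.1 • uVec p.2))
      ((volume.restrict (Set.Ioi (0:ℝ))).prod (volume.restrict (Set.Ioo (-π) π))) := by
    rw [Measure.prod_restrict, ← Measure.volume_eq_prod]
    exact hFT
  set H : ℝ → ℂ := fun θ => ∫ r in Set.Ioi (0:ℝ), |r| • G (r • uVec θ) with hHdef
  have hH_B : IntegrableOn H (Set.Ioo (-π) π) := by
    have := (hFT'.swap).integral_prod_left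
    simpa [hHdef, IntegrableOn] using this
  have hH : IntervalIntegrable H volume (-π) π := by
    rw [intervalIntegrable_iff, Set.uIoc_of_le (by linarith)]
    exact hH_B.congr_set_ae Ioo_ae_eq_Ioc.symm
  have hmem : ∀ c : ℝ, -π ≤ c → c ≤ π → c ∈ Set.uIcc (-π) π := by
    intro c hc1 hc2
    rw [Set.mem_uIcc]
    exact Or.inl ⟨hc1, hc2⟩
  have h1 : IntervalIntegrable H volume (-π) 0 :=
    hH.mono_set (Set.uIcc_subset_uIcc (hmem _ le_rfl (by linarith)) (hmem _ (by linarith) (by linarith)))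
  have h2 : IntervalIntegrable H volume 0 π :=
    hH.mono_set (Set.uIcc_subset_uIcc (hmem _ (by linarith) (by linarith)) (hmem _ (by linarith) le_rfl))
  have hHshift : ∀ θ : ℝ, H (θ - π) = ∫ r in Set.Iic (0:ℝ), |r| • G (r • uVec θ) := by
    intro θ
    have hneg := integral_comp_neg_Ioi (0:ℝ) (fun r' : ℝ => |r'| • G (r' • uVec θ))
    simp only [neg_zero] at hneg
    rw [hHdef, ← hneg]
    refine setIntegral_congr_fun measurableSet_Ioi (fun r _ => ?_)
    simp only [uVec_sub_pi, smul_neg, abs_neg, neg_smul]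
  have hstep1 : (∫ θ in (-π)..(0:ℝ), H θ) = ∫ θ in (0:ℝ)..π, H (θ - π) := by
    rw [intervalIntegral.integral_comp_sub_right H π]
    norm_num
  have hP : IntervalIntegrable (fun θ => ∫ r in Set.Iic (0:ℝ), |r| • G (r • uVec θ)) volume 0 π := by
    have : (fun θ => ∫ r in Set.Iic (0:ℝ), |r| • G (r • uVec θ)) = fun θ => H (θ - π) :=
      funext fun θ => (hHshift θ).symm
    rw [this]
    have := h1.comp_sub_right π
    norm_num at this
    exact this
  calc (∫ ω : E2, G ω)
      = ∫ p : ℝ × ℝ, G (toE2 p) := (toE2_mp.integral_comp toE2.measurableEmbedding _).symm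
    _ = ∫ p in polarCoord.target, p.1 • G (toE2 (polarCoord.symm p)) :=
        (integral_comp_polarCoord_symm _).symm
    _ = ∫ p in polarCoord.target, |p.1| • G (p.1 • uVec p.2) := by
        refine setIntegral_congr_fun polarCoord.open_target.measurableSet (fun p hp => ?_)
        rw [toE2_polar, abs_of_pos hp.1]
    _ = ∫ θ in Set.Ioo (-π) π, ∫ r in Set.Ioi (0:ℝ), |r| • G (r • uVec θ) := by
        rw [show polarCoord.target = Set.Ioi (0:ℝ) ×ˢ Set.Ioo (-π) π from rfl,
          Measure.volume_eq_prod, ← Measure.prod_restrict]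
        exact integral_prod_symm _ hFT'
    _ = ∫ θ in (-π)..π, H θ := by
        rw [intervalIntegral.integral_of_le (by linarith)]
        exact setIntegral_congr_set Ioo_ae_eq_Ioc
    _ = (∫ θ in (-π)..(0:ℝ), H θ) + ∫ θ in (0:ℝ)..π, H θ :=
        (intervalIntegral.integral_add_adjacent_intervals h1 h2).symm
    _ = (∫ θ in (0:ℝ)..π, (∫ r in Set.Iic (0:ℝ), |r| • G (r • uVec θ)))
        + ∫ θ in (0:ℝ)..π, H θ := by
        rw [hstep1]
        congr 1
        exact intervalIntegral.integral_congr (fun θ _ => hHshift θ)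
    _ = ∫ θ in (0:ℝ)..π, ((∫ r in Set.Iic (0:ℝ), |r| • G (r • uVec θ)) + H θ) :=
        (intervalIntegral.integral_add hP h2).symm
    _ = ∫ θ in (0:ℝ)..π, ∫ r : ℝ, |r| • G (r • uVec θ) := by
        refine intervalIntegral.integral_congr (fun θ _ => ?_)
        rw [hHdef]
        exact intervalIntegral.integral_Iic_add_Ioi ((hray θ).integrableOn) ((hray θ).integrableOn)

noncomputable def uline (θ : ℝ) : ℝ →L[ℝ] E2 :=
  (ContinuousLinearMap.id ℝ ℝ).smulRight (uVec θ)

lemma uline_apply (θ r : ℝ) : uline θ r = r • uVec θ := rfl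

lemma norm_uVec (θ : ℝ) : ‖uVec θ‖ = 1 := by
  have h := real_inner_self_eq_norm_mul_norm (uVec θ)
  rw [inner_uu] at h
  nlinarith [norm_nonneg (uVec θ)]

noncomputable def rayComp (θ : ℝ) (φ : SchwartzMap (EuclideanSpace ℝ (Fin 2)) ℂ) :
    SchwartzMap ℝ ℂ :=
  SchwartzMap.compCLM (𝕜 := ℝ) (uline θ).hasTemperateGrowth
    ⟨1, 1, fun r => by
      rw [uline_apply, norm_smul, norm_uVec, mul_one, pow_one, one_mul, Real.norm_eq_abs]
      linarith [abs_nonneg r]⟩ φ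

lemma rayComp_apply (θ : ℝ) (φ : SchwartzMap (EuclideanSpace ℝ (Fin 2)) ℂ) (r : ℝ) :
    rayComp θ φ r = φ (r • uVec θ) := rfl

lemma cont_ray (θ : ℝ) : Continuous fun r : ℝ => r • uVec θ :=
  (continuous_id.smul continuous_const)

lemma ray_integrable (φ ψ : SchwartzMap (EuclideanSpace ℝ (Fin 2)) ℂ) (x : E2) (θ : ℝ) :
    Integrable (fun r : ℝ =>
      |r| • (Real.fourierChar ⟪x, r • uVec θ⟫ • (φ (r • uVec θ) * ψ (r • uVec θ)))) := by
  set C := (SchwartzMap.seminorm ℝ 0 0) φ with hC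
  refine Integrable.mono' (g := fun r : ℝ => C * (‖r‖ ^ 1 * ‖rayComp θ ψ r‖))
    (((rayComp θ ψ).integrable_pow_mul volume 1).const_mul C) ?_ ?_
  · refine Continuous.aestronglyMeasurable ?_
    refine (continuous_abs).smul (Continuous.smul ?_ ?_)
    · exact continuous_subtype_val.comp (Real.continuous_fourierChar.comp (continuous_const.inner (cont_ray θ)))
    · exact ((φ.continuous.comp (cont_ray θ)).mul (ψ.continuous.comp (cont_ray θ)))
  · refine Filter.Eventually.of_forall fun r => ?_
    rw [norm_smul, Circle.norm_smul, norm_mul, Real.norm_eq_abs, abs_abs, rayComp_apply,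
      pow_one, Real.norm_eq_abs]
    calc |r| * (‖φ (r • uVec θ)‖ * ‖ψ (r • uVec θ)‖)
        ≤ |r| * (C * ‖ψ (r • uVec θ)‖) := by
          refine mul_le_mul_of_nonneg_left ?_ (abs_nonneg r)
          exact mul_le_mul_of_nonneg_right (φ.norm_le_seminorm ℝ _) (norm_nonneg _)
      _ = C * (|r| * ‖ψ (r • uVec θ)‖) := by ring

lemma ramp_integrable (ψ : SchwartzMap (EuclideanSpace ℝ (Fin 2)) ℂ) (θ : ℝ) :
    Integrable (fun r : ℝ => ((|r| : ℝ) : ℂ) * ψ (r • uVec θ)) := by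
  refine Integrable.mono' (g := fun r : ℝ => ‖r‖ ^ 1 * ‖rayComp θ ψ r‖)
    ((rayComp θ ψ).integrable_pow_mul volume 1) ?_ ?_
  · exact (Complex.continuous_ofReal.comp continuous_abs).mul
      (ψ.continuous.comp (cont_ray θ)) |>.aestronglyMeasurable
  · refine Filter.Eventually.of_forall fun r => ?_
    rw [norm_mul, Complex.norm_real, Real.norm_eq_abs, abs_abs, rayComp_apply,
      pow_one, Real.norm_eq_abs]

lemma radon_integrable (f : SchwartzMap (EuclideanSpace ℝ (Fin 2)) ℂ) (θ : ℝ) :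
    Integrable (fun t : ℝ => ∫ s : ℝ, f (t • uVec θ + s • vVec θ)) := by
  have hcomp : Integrable (fun p : ℝ × ℝ => f (mapRot θ p)) :=
    ((mapRot_mp θ).integrable_comp_emb (mapRot θ).measurableEmbedding).2 f.integrable
  rw [Measure.volume_eq_prod] at hcomp
  have h := hcomp.integral_prod_left
  refine h.congr (Filter.Eventually.of_forall fun t => ?_)
  congr 1

end Ramp

open Ramp in
/-- angle-independent ramp filter: let f, η be Schwartz functions on ℝ²
with η radially symmetric (invariant under every rotation in SO(2)). Let k be the 1D inverse
Fourier transform of t ↦ |t| η̂(t u₀). Then for every x,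
(f ⋆ η)(x) = ∫₀^π (R_θ f ⋆₁ k)(⟨x, u_θ⟩) dθ; in particular the filter k is independent of θ. -/
theorem ramp_filter_backprojection (f η : SchwartzMap (EuclideanSpace ℝ (Fin 2)) ℂ)
    (hη : ∀ A : Matrix (Fin 2) (Fin 2) ℝ, A ∈ Matrix.specialOrthogonalGroup (Fin 2) ℝ →
      ∀ ω : EuclideanSpace ℝ (Fin 2),
        η ((WithLp.equiv 2 (Fin 2 → ℝ)).symm (A.mulVec ((WithLp.equiv 2 (Fin 2 → ℝ)) ω))) = η ω)
    (x : EuclideanSpace ℝ (Fin 2)) :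
    conv2c (fun y => f y) (fun y => η y) x =
      ∫ θ in (0:ℝ)..π,
        conv1c (radon (fun y => f y) θ)
          (𝓕⁻ fun ω : ℝ => ((|ω| : ℝ) : ℂ) * 𝓕 (fun y => η y) (ω • uVec 0)) ⟪x, uVec θ⟫ := by
  have hrot : ∀ θ ω, (fun y => η y) (rotL θ ω) = (fun y => η y) ω := fun θ ω => by
    simp only
    rw [rotL_eq_mulVec]
    exact hη (rotMat θ) (rotMat_mem θ) ω
  set Ff := SchwartzMap.fourierTransformCLM ℂ f with hFf
  set Fη := SchwartzMap.fourierTransformCLM ℂ η with hFη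
  have hFfc : ⇑Ff = 𝓕 (fun y => f y) := rfl
  have hFηc : ⇑Fη = 𝓕 (fun y => η y) := rfl
  set m : ℝ → ℂ := fun ω : ℝ => ((|ω| : ℝ) : ℂ) * 𝓕 (fun y => η y) (ω • uVec 0) with hm
  set G : EuclideanSpace ℝ (Fin 2) → ℂ :=
    fun ω => Real.fourierChar ⟪x, ω⟫ • (𝓕 (fun y => f y) ω * 𝓕 (fun y => η y) ω) with hG
  have hGi : Integrable G := by
    rw [hG, ← hFfc, ← hFηc]
    refine integrable_char_smul ?_ (aesm_char (continuous_const.inner continuous_id))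
    refine Integrable.bdd_mul (c := (SchwartzMap.seminorm ℝ 0 0) Ff) Fη.integrable Ff.continuous.aestronglyMeasurable ?_
    exact Filter.Eventually.of_forall fun y => Ff.norm_le_seminorm ℝ y
  have hray : ∀ θ : ℝ, Integrable (fun r : ℝ => |r| • G (r • uVec θ)) := fun θ =>
    ray_integrable Ff Fη x θ
  have hmi : Integrable m := ramp_integrable Fη 0
  calc conv2c (fun y => f y) (fun y => η y) x
      = ∫ ω : EuclideanSpace ℝ (Fin 2), G ω :=
        conv2_fourier _ _ f.integrable η.continuous η.integrable
          (by rw [← hFηc]; exact Fη.integrable) x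
    _ = ∫ θ in (0:ℝ)..π, ∫ r : ℝ, |r| • G (r • uVec θ) := polar_fold G hGi hray
    _ = ∫ θ in (0:ℝ)..π, conv1c (radon (fun y => f y) θ) (𝓕⁻ m) ⟪x, uVec θ⟫ := by
        refine intervalIntegral.integral_congr fun θ _ => ?_
        have hg : Integrable (radon (fun y => f y) θ) := radon_integrable f θ
        simp only [conv1c]
        rw [key1d _ _ hg hmi]
        congr 1
        funext r
        simp only [hG, hm]
        rw [slice (fun y => f y) f.integrable θ r,
          fourier_radial (fun y => η y) hrot θ r, real_inner_smul_right]
        simp only [Circle.smul_def, smul_eq_mul, Complex.real_smul]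
        ring
end
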